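/- Let g : E₂ → ℝ ∪ {+∞} be proper and convex and let F : E₁ → E₂ be linear with rge F ∩ ri(dom g) ≠ ∅. Then for every p ∈ E₁, (g ∘ F)*(p) = min {g*(v) : v ∈ E₂, F*(v) = p} (the minimum being attained, possibly +∞), dom (g ∘ F)* = (F*)⁻¹(dom g*), and for every x̄ ∈ dom(g ∘ F), ∂(g ∘ F)(x̄) = F*(∂g(F(x̄))). -/

import Mathlib

open scoped RealInnerProductSpace Pointwise
open Filter

noncomputable section

/-- Convexity of an extended-real-valued function, defined via convexity of its epigraph. -/
def EConvexOn {E : Type*} [AddCommGroup E] [Module ℝ E] (f : E → EReal) : Prop :=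
  Convex ℝ {p : E × ℝ | f p.1 ≤ (p.2 : EReal)}

/-- Closedness (lower semicontinuity) of an extended-real-valued function,
defined via closedness of its epigraph. -/
def EClosed {E : Type*} [TopologicalSpace E] (f : E → EReal) : Prop :=
  IsClosed {p : E × ℝ | f p.1 ≤ (p.2 : EReal)}

/-- Properness: the domain is nonempty and the function never takes the value `-∞`. -/
def EProper {E : Type*} (f : E → EReal) : Prop :=
  (∃ x, f x < ⊤) ∧ ∀ x, f x ≠ ⊥

/-- The (effective) domain of an extended-real-valued function. -/
def edom {E : Type*} (f : E → EReal) : Set E := {x | f x < ⊤}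

/-- The Fenchel conjugate. -/
def econj {E : Type*} [NormedAddCommGroup E] [InnerProductSpace ℝ E]
    (f : E → EReal) (y : E) : EReal :=
  ⨆ x, ((⟪y, x⟫ : ℝ) : EReal) - f x

/-- The convex subdifferential of `f` at `x₀`. -/
def esubdiff {E : Type*} [NormedAddCommGroup E] [InnerProductSpace ℝ E]
    (f : E → EReal) (x₀ : E) : Set E :=
  {w | ∀ x, f x₀ + ((⟪w, x - x₀⟫ : ℝ) : EReal) ≤ f x}

/-- `K` is a cone: it is stable under multiplication by nonnegative scalars. -/
def IsCone {E : Type*} [SMul ℝ E] (K : Set E) : Prop :=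
  ∀ ⦃t : ℝ⦄, 0 ≤ t → ∀ ⦃x⦄, x ∈ K → t • x ∈ K

/-- The polar cone `K° = {v : ⟪v,x⟫ ≤ 0 for all x ∈ K}`. -/
def polarCone {E : Type*} [NormedAddCommGroup E] [InnerProductSpace ℝ E] (K : Set E) : Set E :=
  {v | ∀ x ∈ K, ⟪v, x⟫ ≤ (0 : ℝ)}

/-- The `K`-epigraph of a map `F` with domain `D`. -/
def epiK {E₁ E₂ : Type*} [AddCommGroup E₂] (K : Set E₂) (D : Set E₁) (F : E₁ → E₂) :
    Set (E₁ × E₂) :=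
  {p | p.1 ∈ D ∧ p.2 - F p.1 ∈ K}

/-- The graph of a map `F` with domain `D`. -/
def gphF {E₁ E₂ : Type*} (D : Set E₁) (F : E₁ → E₂) : Set (E₁ × E₂) :=
  {p | p.1 ∈ D ∧ p.2 = F p.1}

open Classical in
/-- The scalarization `⟨v,F⟩` of the map `F` with domain `D`:
it equals `⟪v, F x⟫` on `D` and `+∞` elsewhere. -/
def scal {E₁ E₂ : Type*} [NormedAddCommGroup E₂] [InnerProductSpace ℝ E₂]
    (v : E₂) (D : Set E₁) (F : E₁ → E₂) : E₁ → EReal :=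
  fun x => if x ∈ D then ((⟪v, F x⟫ : ℝ) : EReal) else ⊤

open Classical in
/-- The composition `g ∘ F` for a map `F` with domain `D`:
it equals `g (F x)` on `D` and `+∞` elsewhere. -/
def compFn {E₁ E₂ : Type*} (g : E₂ → EReal) (D : Set E₁) (F : E₁ → E₂) : E₁ → EReal :=
  fun x => if x ∈ D then g (F x) else ⊤

open Classical in
/-- The indicator function of a set: `0` on `S` and `+∞` off `S`. -/
def eindicator {E : Type*} (S : Set E) (x : E) : EReal := if x ∈ S then 0 else ⊤

/-- The support function of a set. -/
def suppFn {E : Type*} [NormedAddCommGroup E] [InnerProductSpace ℝ E] (S : Set E) (y : E) :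
    EReal :=
  ⨆ x ∈ S, ((⟪x, y⟫ : ℝ) : EReal)

/-- The support function of a subset of a product of two inner product spaces,
with respect to the natural sum inner product on the product. -/
def suppFn2 {E₁ E₂ : Type*} [NormedAddCommGroup E₁] [InnerProductSpace ℝ E₁]
    [NormedAddCommGroup E₂] [InnerProductSpace ℝ E₂]
    (S : Set (E₁ × E₂)) (y : E₁ × E₂) : EReal :=
  ⨆ p ∈ S, ((⟪p.1, y.1⟫ + ⟪p.2, y.2⟫ : ℝ) : EReal)

/-- The horizon (recession) cone of a set `C`. -/
def horizonCone {E : Type*} [AddCommGroup E] [Module ℝ E] [TopologicalSpace E] (C : Set E) :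
    Set E :=
  {w | ∀ x ∈ C, ∀ t : ℝ, 0 ≤ t → x + t • w ∈ closure C}

/-- The lower semicontinuous hull:
`(cl f)(x) = inf {a : ∃ xₖ → x with f (xₖ) → a}`. -/
def lscHull {E : Type*} [TopologicalSpace E] (f : E → EReal) (x : E) : EReal :=
  sInf {a : EReal |
    ∃ u : ℕ → E, Tendsto u atTop (nhds x) ∧ Tendsto (fun n => f (u n)) atTop (nhds a)}

/-!
Weak duality `(g ∘ F)*(F* v) ≤ g*(v)` is immediate. Conversely, if `⟪p, ·⟫ - α` minorizes
`g ∘ F`, then `p` vanishes on `ker F`, so `p = F* u` and `⟪u, ·⟫ - α` minorizes `g` on `rge F`.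
Since `rge F` meets `ri (dom g)`, every line through that point in the direction of a point of
`dom g` meets `dom g` on both sides, and a one-dimensional Hahn–Banach step (choosing a slope
between the lower and the upper difference quotients of `g`) extends the minorant one dimension
at a time to an affine minorant `⟪v, ·⟫ - α` of `g` on all of `E₂`. Then `F* v = p` and
`g*(v) ≤ α`, which gives the conjugate formula with attainment and the domain formula. The
subdifferential formula follows since `w ∈ ∂f(x̄)` iff `f*(w) ≤ ⟪w, x̄⟫ - f(x̄)`.
-/

theorem EReal.coe_sub_le_coe_iff (a b : ℝ) (x : EReal) :
    (a : EReal) - x ≤ b ↔ ((a - b : ℝ) : EReal) ≤ x := by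
  induction x using EReal.rec with
  | bot => simp [-EReal.coe_sub]
  | coe r => norm_cast; constructor <;> intro h <;> linarith
  | top => simp

section Conjugate

variable {E : Type*} [NormedAddCommGroup E] [InnerProductSpace ℝ E]

theorem econj_le_coe_iff {f : E → EReal} {y : E} {α : ℝ} :
    econj f y ≤ α ↔ ∀ x, ((⟪y, x⟫ - α : ℝ) : EReal) ≤ f x := by
  simp only [econj, iSup_le_iff, EReal.coe_sub_le_coe_iff]

theorem mem_esubdiff_iff_econj_le {f : E → EReal} {x₀ w : E} {r : ℝ} (hr : f x₀ = r) :
    w ∈ esubdiff f x₀ ↔ econj f w ≤ ((⟪w, x₀⟫ - r : ℝ) : EReal) := by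
  rw [econj_le_coe_iff]
  refine forall_congr' fun x => ?_
  rw [hr, ← EReal.coe_add, inner_sub_right]
  ring_nf

theorem econj_ne_bot {f : E → EReal} {x : E} (hx : f x ≠ ⊤) (y : E) : econj f y ≠ ⊥ := by
  refine ne_bot_of_le_ne_bot (EReal.coe_ne_bot (⟪y, x⟫ - (f x).toReal)) (le_iSup_of_le x ?_)
  rw [EReal.coe_sub]
  exact EReal.sub_le_sub le_rfl (EReal.le_coe_toReal hx)

end Conjugate

theorem exists_pos_add_smul_sub_mem_of_mem_intrinsicInterior {E : Type*} [AddCommGroup E]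
    [Module ℝ E] [TopologicalSpace E] [IsTopologicalAddGroup E] [ContinuousSMul ℝ E]
    {C : Set E} {x y : E} (hx : x ∈ intrinsicInterior ℝ C) (hy : y ∈ C) :
    ∃ ε > (0 : ℝ), x + ε • (x - y) ∈ C := by
  obtain ⟨x', hx', rfl⟩ := mem_intrinsicInterior.1 hx
  have hmem (ε : ℝ) : (x' : E) + ε • ((x' : E) - y) ∈ affineSpan ℝ C := by
    simpa [vsub_eq_sub, vadd_eq_add, add_comm] using
      AffineSubspace.smul_vsub_vadd_mem _ ε x'.2 (subset_affineSpan ℝ C hy) x'.2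
  let path : ℝ → affineSpan ℝ C := fun ε => ⟨_, hmem ε⟩
  have hpath : Continuous path := by fun_prop
  have hnhds : ∀ᶠ ε in nhds (0 : ℝ), path ε ∈ interior ((↑) ⁻¹' C) :=
    hpath.continuousAt.preimage_mem_nhds (by simpa [path] using isOpen_interior.mem_nhds hx')
  obtain ⟨ε, hε, hεC⟩ := ((hnhds.filter_mono nhdsWithin_le_nhds).and
    (self_mem_nhdsWithin (s := Set.Ioi (0 : ℝ)))).exists
  exact ⟨ε, hεC, interior_subset (s := ((↑) ⁻¹' C : Set (affineSpan ℝ C))) hε⟩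

section Extension

variable {E : Type*} [AddCommGroup E] [Module ℝ E] {h : E → EReal} {M : Submodule ℝ E}
  {ℓ : E →ₗ[ℝ] ℝ} {α : ℝ}

theorem EConvexOn.apply_smul_add_smul_le (hh : EConvexOn h) {x y : E} {A B a b : ℝ}
    (hx : h x ≤ A) (hy : h y ≤ B) (ha : 0 ≤ a) (hb : 0 ≤ b) (hab : a + b = 1) :
    h (a • x + b • y) ≤ ((a * A + b * B : ℝ) : EReal) :=
  hh (x := (x, A)) (y := (y, B)) hx hy ha hb hab

theorem EConvexOn.lower_slope_le_upper_slope (hh : EConvexOn h)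
    (hle : ∀ m ∈ M, ((ℓ m - α : ℝ) : EReal) ≤ h m)
    {e m m' : E} (hm : m ∈ M) (hm' : m' ∈ M) {s t A B : ℝ} (hs : 0 < s) (ht : 0 < t)
    (hA : h (m + t • e) ≤ A) (hB : h (m' - s • e) ≤ B) :
    (ℓ m' - α - B) / s ≤ (A + α - ℓ m) / t := by
  have hst : 0 < s + t := by linarith
  have hz : (s / (s + t)) • (m + t • e) + (t / (s + t)) • (m' - s • e)
      = (s / (s + t)) • m + (t / (s + t)) • m' := by
    module
  have hcomb := (hle _ (M.add_mem (M.smul_mem _ hm) (M.smul_mem _ hm'))).trans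
    (hz ▸ hh.apply_smul_add_smul_le hA hB (by positivity) (by positivity) (by field_simp))
  rw [EReal.coe_le_coe_iff, map_add, map_smul, map_smul, smul_eq_mul, smul_eq_mul] at hcomb
  rw [div_le_div_iff₀ hs ht]
  field_simp at hcomb
  linarith

theorem EConvexOn.exists_minorant_slope (hh : EConvexOn h) (hbot : ∀ y, h y ≠ ⊥)
    (hle : ∀ m ∈ M, ((ℓ m - α : ℝ) : EReal) ≤ h m) {e : E}
    (hpos : ∃ m ∈ M, ∃ t > (0 : ℝ), h (m + t • e) < ⊤)
    (hneg : ∃ m ∈ M, ∃ s > (0 : ℝ), h (m - s • e) < ⊤) :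
    ∃ c : ℝ, ∀ m ∈ M, ∀ t : ℝ, ((ℓ m + t * c - α : ℝ) : EReal) ≤ h (m + t • e) := by
  set U := {u | ∃ m ∈ M, ∃ t > (0 : ℝ), ∃ A : ℝ, h (m + t • e) ≤ A ∧ u = (A + α - ℓ m) / t}
  set L := {l | ∃ m ∈ M, ∃ s > (0 : ℝ), ∃ B : ℝ, h (m - s • e) ≤ B ∧ l = (ℓ m - α - B) / s}
  have hU : U.Nonempty := by
    obtain ⟨m, hm, t, ht, hfin⟩ := hpos
    exact ⟨_, m, hm, t, ht, _, EReal.le_coe_toReal hfin.ne, rfl⟩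
  have hL : L.Nonempty := by
    obtain ⟨m, hm, s, hs, hfin⟩ := hneg
    exact ⟨_, m, hm, s, hs, _, EReal.le_coe_toReal hfin.ne, rfl⟩
  -- every lower quotient is at most every upper quotient, so a slope fits between them
  obtain ⟨c, hLc, hcU⟩ := exists_between_of_forall_le hL hU <| by
    rintro _ ⟨m', hm', s, hs, B, hB, rfl⟩ _ ⟨m, hm, t, ht, A, hA, rfl⟩
    exact hh.lower_slope_le_upper_slope hle hm hm' hs ht hA hB
  refine ⟨c, fun m hm t => ?_⟩
  rcases eq_or_ne (h (m + t • e)) ⊤ with htop | htop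
  · simp [htop]
  obtain ⟨A, hA⟩ : ∃ A : ℝ, h (m + t • e) = A := ⟨_, (EReal.coe_toReal htop (hbot _)).symm⟩
  rw [hA, EReal.coe_le_coe_iff]
  rcases lt_trichotomy t 0 with ht | rfl | ht
  · have hmem : (ℓ m - α - A) / -t ∈ L :=
      ⟨m, hm, -t, neg_pos.2 ht, A, by rw [neg_smul, sub_neg_eq_add, hA], rfl⟩
    have := hLc hmem
    rw [div_le_iff₀ (neg_pos.2 ht)] at this
    linarith
  · have := hle m hm
    rw [zero_smul, add_zero] at hA
    rw [hA, EReal.coe_le_coe_iff] at this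
    linarith
  · have := hcU ⟨m, hm, t, ht, A, hA.le, rfl⟩
    rw [le_div_iff₀ ht] at this
    linarith

theorem EConvexOn.exists_extension_sup_span_minorant (hh : EConvexOn h) (hbot : ∀ y, h y ≠ ⊥)
    (hle : ∀ m ∈ M, ((ℓ m - α : ℝ) : EReal) ≤ h m) {e : E} (he : e ∉ M)
    (hpos : ∃ m ∈ M, ∃ t > (0 : ℝ), h (m + t • e) < ⊤)
    (hneg : ∃ m ∈ M, ∃ s > (0 : ℝ), h (m - s • e) < ⊤) :
    ∃ ℓ₁ : E →ₗ[ℝ] ℝ, (∀ m ∈ M, ℓ₁ m = ℓ m) ∧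
      ∀ z ∈ M ⊔ ℝ ∙ e, ((ℓ₁ z - α : ℝ) : EReal) ≤ h z := by
  obtain ⟨c, hc⟩ := hh.exists_minorant_slope hbot hle hpos hneg
  obtain ⟨ψ, hψe, hψM⟩ := Submodule.exists_dual_map_eq_bot_of_notMem he inferInstance
  have hψ : ∀ m ∈ M, ψ m = 0 := fun m hm => by
    simpa [hψM] using Submodule.mem_map_of_mem (f := ψ) hm
  refine ⟨ℓ + ((c - ℓ e) / ψ e) • ψ, fun m hm => by simp [hψ m hm], fun z hz => ?_⟩
  obtain ⟨m, hm, _, hte, rfl⟩ := Submodule.mem_sup.1 hz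
  obtain ⟨t, rfl⟩ := Submodule.mem_span_singleton.1 hte
  convert hc m hm t using 3
  simp only [LinearMap.add_apply, LinearMap.smul_apply, map_add, map_smul, hψ m hm,
    smul_eq_mul]
  field_simp
  ring

theorem EConvexOn.exists_extension_minorant [FiniteDimensional ℝ E] (hh : EConvexOn h)
    (hbot : ∀ y, h y ≠ ⊥) {xb : E}
    (hcore : ∀ y ∈ edom h, ∃ ε > (0 : ℝ), xb + ε • (xb - y) ∈ edom h) (hxb : xb ∈ M)
    (hle : ∀ m ∈ M, ((ℓ m - α : ℝ) : EReal) ≤ h m) :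
    ∃ ℓ' : E →ₗ[ℝ] ℝ, (∀ m ∈ M, ℓ' m = ℓ m) ∧ ∀ y, ((ℓ' y - α : ℝ) : EReal) ≤ h y := by
  induction M using WellFoundedGT.induction generalizing ℓ with
  | _ M IH =>
  -- if `dom h ⊆ M` then `h = ⊤` off `M`; otherwise extend `ℓ` in the direction from `xb` to a
  -- point of `dom h \ M`, along which `hcore` puts points of `dom h` on both sides of `xb`
  by_cases hdom : edom h ⊆ M
  · refine ⟨ℓ, fun _ _ => rfl, fun y => ?_⟩
    by_cases hy : y ∈ M
    · exact hle y hy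
    · rw [not_lt_top_iff.1 fun hy' : h y < ⊤ => hy (hdom hy')]
      exact le_top
  obtain ⟨y, hy, hyM⟩ := Set.not_subset.1 hdom
  have he : y - xb ∉ M := fun he => hyM (by simpa using M.add_mem he hxb)
  obtain ⟨ε, hε, hεy⟩ := hcore y hy
  obtain ⟨ℓ₁, hℓ₁M, hℓ₁⟩ := hh.exists_extension_sup_span_minorant hbot hle he
    ⟨xb, hxb, 1, one_pos, by rwa [one_smul, add_sub_cancel]⟩
    ⟨xb, hxb, ε, hε, by rwa [show xb - ε • (y - xb) = xb + ε • (xb - y) by module]⟩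
  have hlt : M < M ⊔ ℝ ∙ (y - xb) :=
    left_lt_sup.2 fun hle' => he (hle' (Submodule.mem_span_singleton_self _))
  obtain ⟨ℓ', hℓ'M, hℓ'⟩ := IH _ hlt (Submodule.mem_sup_left hxb) hℓ₁
  exact ⟨ℓ', fun m hm => (hℓ'M m (Submodule.mem_sup_left hm)).trans (hℓ₁M m hm), hℓ'⟩

end Extension

variable {E E₁ E₂ : Type*}
  [NormedAddCommGroup E] [InnerProductSpace ℝ E] [FiniteDimensional ℝ E]
  [NormedAddCommGroup E₁] [InnerProductSpace ℝ E₁] [FiniteDimensional ℝ E₁]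
  [NormedAddCommGroup E₂] [InnerProductSpace ℝ E₂] [FiniteDimensional ℝ E₂]

theorem econj_comp_adjoint_le (g : E₂ → EReal) (F : E₁ →ₗ[ℝ] E₂) (v : E₂) :
    econj (fun x => g (F x)) (LinearMap.adjoint F v) ≤ econj g v :=
  iSup_le fun x => by
    rw [LinearMap.adjoint_inner_left]
    exact le_iSup_of_le (F x) le_rfl

theorem exists_adjoint_eq_econj_le {g : E₂ → EReal} (hbot : ∀ y, g y ≠ ⊥)
    (hconv : EConvexOn g) {F : E₁ →ₗ[ℝ] E₂}
    (hCQ : (Set.range F ∩ intrinsicInterior ℝ (edom g)).Nonempty) {p : E₁} {α : ℝ}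
    (hp : econj (fun x => g (F x)) p ≤ α) :
    ∃ v, LinearMap.adjoint F v = p ∧ econj g v ≤ α := by
  obtain ⟨_, ⟨x₁, rfl⟩, hx₁⟩ := hCQ
  rw [econj_le_coe_iff] at hp
  -- on `x₁ + ker F` the bound `⟪p, ·⟫ - α ≤ g (F x₁)` is a constant, so `p ⊥ ker F`
  have hker : p ∈ (LinearMap.ker F)ᗮ := by
    intro z hz
    obtain ⟨r, hr⟩ : ∃ r : ℝ, g (F x₁) = r :=
      ⟨_, (EReal.coe_toReal (intrinsicInterior_subset hx₁).ne (hbot _)).symm⟩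
    have hbound (s : ℝ) : s * ⟪p, z⟫ ≤ r + α - ⟪p, x₁⟫ := by
      have := hp (x₁ + s • z)
      rw [map_add, map_smul, LinearMap.mem_ker.1 hz, smul_zero, add_zero, hr,
        EReal.coe_le_coe_iff, inner_add_right, real_inner_smul_right] at this
      linarith
    rw [real_inner_comm]
    by_contra hne
    have := hbound ((r + α - ⟪p, x₁⟫ + 1) / ⟪p, z⟫)
    rw [div_mul_cancel₀ _ hne] at this
    linarith
  rw [LinearMap.orthogonal_ker] at hker
  obtain ⟨u, rfl⟩ := hker
  obtain ⟨ℓ, hℓF, hℓ⟩ := hconv.exists_extension_minorant (M := LinearMap.range F)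
    (ℓ := innerₛₗ ℝ u) hbot
    (fun _ hy => exists_pos_add_smul_sub_mem_of_mem_intrinsicInterior hx₁ hy) ⟨x₁, rfl⟩
    (by rintro _ ⟨x, rfl⟩; simpa [LinearMap.adjoint_inner_left] using hp x)
  set v := (InnerProductSpace.toDual ℝ E₂).symm (LinearMap.toContinuousLinearMap ℓ)
  have hv (y : E₂) : ⟪v, y⟫ = ℓ y := InnerProductSpace.toDual_symm_apply
  refine ⟨v, ext_inner_right ℝ fun x => ?_, econj_le_coe_iff.2 fun y => hv y ▸ hℓ y⟩
  rw [LinearMap.adjoint_inner_left, LinearMap.adjoint_inner_left, hv, hℓF _ ⟨x, rfl⟩]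
  rfl

theorem exists_adjoint_eq_econj_eq {g : E₂ → EReal} (hbot : ∀ y, g y ≠ ⊥)
    (hconv : EConvexOn g) {F : E₁ →ₗ[ℝ] E₂}
    (hCQ : (Set.range F ∩ intrinsicInterior ℝ (edom g)).Nonempty) {p : E₁}
    (hp : econj (fun x => g (F x)) p < ⊤) :
    ∃ v, LinearMap.adjoint F v = p ∧ econj (fun x => g (F x)) p = econj g v := by
  obtain ⟨_, ⟨x₁, rfl⟩, hx₁⟩ := hCQ
  have hne : econj (fun x => g (F x)) p ≠ ⊥ :=
    econj_ne_bot (x := x₁) (intrinsicInterior_subset hx₁).ne p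
  obtain ⟨v, rfl, hv⟩ := exists_adjoint_eq_econj_le hbot hconv ⟨_, ⟨x₁, rfl⟩, hx₁⟩
    (EReal.le_coe_toReal hp.ne)
  exact ⟨v, rfl, le_antisymm (econj_comp_adjoint_le g F v)
    (hv.trans (EReal.coe_toReal hp.ne hne).le)⟩

theorem esubdiff_comp_eq_image {g : E₂ → EReal} (hbot : ∀ y, g y ≠ ⊥)
    (hconv : EConvexOn g) {F : E₁ →ₗ[ℝ] E₂}
    (hCQ : (Set.range F ∩ intrinsicInterior ℝ (edom g)).Nonempty) {x₀ : E₁}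
    (hx₀ : g (F x₀) < ⊤) :
    esubdiff (fun x => g (F x)) x₀ = LinearMap.adjoint F '' esubdiff g (F x₀) := by
  obtain ⟨r, hr⟩ : ∃ r : ℝ, g (F x₀) = r := ⟨_, (EReal.coe_toReal hx₀.ne (hbot _)).symm⟩
  ext w
  rw [mem_esubdiff_iff_econj_le (f := fun x => g (F x)) hr]
  constructor
  · intro hw
    obtain ⟨v, rfl, hv⟩ := exists_adjoint_eq_econj_eq hbot hconv hCQ
      (hw.trans_lt (EReal.coe_lt_top _))
    rw [hv, LinearMap.adjoint_inner_left, ← mem_esubdiff_iff_econj_le hr] at hw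
    exact ⟨v, hw, rfl⟩
  · rintro ⟨v, hv, rfl⟩
    rw [mem_esubdiff_iff_econj_le hr] at hv
    rw [LinearMap.adjoint_inner_left]
    exact (econj_comp_adjoint_le g F v).trans hv

/-- The linear case: if `g` is proper and convex, `F` is linear and
`rge F ∩ ri(dom g) ≠ ∅`, then `(g ∘ F)*(p) = min {g*(v) : F*(v) = p}` (attained whenever the
constraint set is nonempty), `dom (g ∘ F)* = F*(dom g*)`, and
`∂(g ∘ F)(x₀) = F*(∂g(F x₀))` on `dom (g ∘ F)`. -/
theorem conjugate_and_subdifferential_linear_case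
    (g : E₂ → EReal) (hg_proper : EProper g) (hg_conv : EConvexOn g)
    (F : E₁ →ₗ[ℝ] E₂)
    (hCQ : (Set.range F ∩ intrinsicInterior ℝ (edom g)).Nonempty) :
    (∀ p : E₁,
      econj (fun x => g (F x)) p = ⨅ v ∈ {v : E₂ | LinearMap.adjoint F v = p}, econj g v) ∧
    (∀ p : E₁, {v : E₂ | LinearMap.adjoint F v = p}.Nonempty →
      ∃ v : E₂, LinearMap.adjoint F v = p ∧ econj (fun x => g (F x)) p = econj g v) ∧
    edom (econj (fun x => g (F x))) = LinearMap.adjoint F '' edom (econj g) ∧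
    (∀ x₀ : E₁, g (F x₀) < ⊤ →
      esubdiff (fun x => g (F x)) x₀ = LinearMap.adjoint F '' esubdiff g (F x₀)) := by
  have attain := fun p => exists_adjoint_eq_econj_eq hg_proper.2 hg_conv hCQ (p := p)
  refine ⟨fun p => ?_, fun p ⟨v₀, hv₀⟩ => ?_, ?_,
    fun x₀ => esubdiff_comp_eq_image hg_proper.2 hg_conv hCQ⟩
  · refine le_antisymm (le_iInf₂ fun v hv => hv ▸ econj_comp_adjoint_le g F v) ?_
    rcases eq_top_or_lt_top (econj (fun x => g (F x)) p) with hp | hp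
    · exact hp ▸ le_top
    · obtain ⟨v, hv, heq⟩ := attain p hp
      exact heq ▸ iInf₂_le v hv
  · rcases eq_top_or_lt_top (econj (fun x => g (F x)) p) with hp | hp
    · refine ⟨v₀, hv₀, hp.trans (top_le_iff.1 ?_).symm⟩
      exact hp ▸ hv₀ ▸ econj_comp_adjoint_le g F v₀
    · exact attain p hp
  · ext p
    refine ⟨fun hp => ?_, ?_⟩
    · obtain ⟨v, hv, heq⟩ := attain p hp
      exact ⟨v, (heq ▸ hp : econj g v < ⊤), hv⟩
    · rintro ⟨v, hv, rfl⟩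
      exact (econj_comp_adjoint_le g F v).trans_lt hv
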